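/- Let G be a connected finite weighted graph with positive edge weights, and let u and v be two vertices of G that have a common distance-preserving spanning tree in G. Let P = (u = v_0, v_1, ..., v_k = v) be the unique shortest u-v path in G, and for 0 ≤ i ≤ k let V_i = {x ∈ V(G) : d_G(x, v_i) = d_G(x, V(P))}. If e = xy is an edge of G with x ∈ V_i and y ∈ V_j, then w(e) ≥ d_G(v_i, v_j) and |d_G(v_i, x) − d_G(v_j, y)| ≤ w(e) − d_G(v_i, v_j). -/

import Mathlib

open SimpleGraph

/-- The weighted length of a walk: the sum of the weights of its edges. -/
def SimpleGraph.Walk.wlength {V : Type*} {G : SimpleGraph V} (w : V → V → ℝ) {x y : V}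
    (p : G.Walk x y) : ℝ :=
  (p.darts.map fun d => w d.toProd.1 d.toProd.2).sum

/-- The weighted distance between two vertices: the minimum weighted length of a walk. -/
noncomputable def SimpleGraph.wdist {V : Type*} (G : SimpleGraph V) (w : V → V → ℝ)
    (x y : V) : ℝ :=
  sInf {r : ℝ | ∃ p : G.Walk x y, p.wlength w = r}

/-- The weighted distance from a vertex to a set of vertices. -/
noncomputable def SimpleGraph.wdistS {V : Type*} (G : SimpleGraph V) (w : V → V → ℝ)
    (x : V) (S : Set V) : ℝ :=
  sInf (G.wdist w x '' S)

/-- `Vset G w P i` is the set of vertices whose nearest vertex on the walk `P` is `P.getVert i`,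
i.e. `V_i = {x : d_G(x, v_i) = d_G(x, V(P))}`. -/
def Vset {V : Type*} (G : SimpleGraph V) (w : V → V → ℝ) {u v : V} (P : G.Walk u v)
    (i : ℕ) : Set V :=
  {x : V | G.wdist w x (P.getVert i) = G.wdistS w x {z | z ∈ P.support}}

/-!
Let `R` be the `u`–`v` path of the tree; it has length `d(u, v)`, so it is the unique shortest path
`P`. For any `x`, the first vertex `m` of `R` on the tree path from `x` to `u` also lies on the tree
path from `x` to `v`, and since tree paths realise the distances from `u` and `v`, `m` lies on
shortest `u`–`x` and `v`–`x` paths. As `P` is a geodesic and the point `v_i` of `P` nearest to `x`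
is no farther than `m`, the same holds for `v_i`: `d(u, x) = d(u, v_i) + d(v_i, x)` and
`d(v, x) = d(v, v_i) + d(v_i, x)`. For an edge `xy`, `d(u, ·)` and `d(v, ·)` change by at most
`w(xy)` from `x` to `y`, and along the geodesic these two differences give the two bounds.
-/

namespace SimpleGraph

variable {V : Type*} {G T : SimpleGraph V} {w : V → V → ℝ}

namespace Walk

variable {x y z : V}

@[simp]
lemma wlength_nil : (nil : G.Walk x x).wlength w = 0 := rfl

@[simp]
lemma wlength_cons (h : G.Adj x y) (p : G.Walk y z) :
    (cons h p).wlength w = w x y + p.wlength w := by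
  simp [wlength]

lemma wlength_append (p : G.Walk x y) (q : G.Walk y z) :
    (p.append q).wlength w = p.wlength w + q.wlength w := by
  simp [wlength]

lemma wlength_take_add_wlength_drop (p : G.Walk x y) (n : ℕ) :
    (p.take n).wlength w + (p.drop n).wlength w = p.wlength w := by
  simp only [wlength, darts_take, darts_drop, ← List.sum_append, ← List.map_append,
    List.take_append_drop]

lemma wlength_reverse (hsymm : ∀ a b, w a b = w b a) (p : G.Walk x y) :
    p.reverse.wlength w = p.wlength w := by
  simp [wlength, darts_reverse, List.sum_reverse, Function.comp_def, hsymm]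

lemma wlength_mapLe (hTG : T ≤ G) (p : T.Walk x y) : (p.mapLe hTG).wlength w = p.wlength w := by
  simp [wlength, mapLe, darts_map, Function.comp_def]

lemma wlength_nonneg (hw : ∀ a b, G.Adj a b → 0 ≤ w a b) (p : G.Walk x y) :
    0 ≤ p.wlength w :=
  List.sum_nonneg (by simpa using fun d _ => hw _ _ d.adj)

end Walk

open Walk

variable {a b c u v x y : V}

lemma wdist_le_wlength (hw : ∀ a b, G.Adj a b → 0 ≤ w a b) (p : G.Walk x y) :
    G.wdist w x y ≤ p.wlength w :=
  csInf_le ⟨0, by rintro r ⟨q, rfl⟩; exact q.wlength_nonneg hw⟩ ⟨p, rfl⟩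

lemma le_wdist {r : ℝ} (hxy : G.Reachable x y) (h : ∀ p : G.Walk x y, r ≤ p.wlength w) :
    r ≤ G.wdist w x y :=
  le_csInf (let ⟨p⟩ := hxy; ⟨_, p, rfl⟩) (by rintro _ ⟨p, rfl⟩; exact h p)

lemma wdist_nonneg (hw : ∀ a b, G.Adj a b → 0 ≤ w a b) (x y : V) : 0 ≤ G.wdist w x y :=
  Real.sInf_nonneg (by rintro r ⟨p, rfl⟩; exact p.wlength_nonneg hw)

lemma wdist_comm (hsymm : ∀ a b, w a b = w b a) (x y : V) : G.wdist w x y = G.wdist w y x := by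
  have h (a b : V) : {r | ∃ p : G.Walk a b, p.wlength w = r} ⊆
      {r | ∃ p : G.Walk b a, p.wlength w = r} := by
    rintro _ ⟨p, rfl⟩
    exact ⟨p.reverse, p.wlength_reverse hsymm⟩
  exact congrArg sInf ((h x y).antisymm (h y x))

lemma wdist_triangle (hG : G.Preconnected) (hw : ∀ a b, G.Adj a b → 0 ≤ w a b) (x y z : V) :
    G.wdist w x z ≤ G.wdist w x y + G.wdist w y z := by
  have h (q : G.Walk y z) : G.wdist w x z - q.wlength w ≤ G.wdist w x y :=
    le_wdist (hG x y) fun p => by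
      linarith [wlength_append p q (w := w), wdist_le_wlength hw (p.append q)]
  have h' : G.wdist w x z - G.wdist w x y ≤ G.wdist w y z :=
    le_wdist (hG y z) fun q => by linarith [h q]
  linarith

lemma wdist_le_weight (hw : ∀ a b, G.Adj a b → 0 ≤ w a b) (h : G.Adj x y) :
    G.wdist w x y ≤ w x y := by
  simpa using wdist_le_wlength hw (cons h nil)

lemma wdist_add_wdist_getVert_le (hw : ∀ a b, G.Adj a b → 0 ≤ w a b) (p : G.Walk a b)
    (n : ℕ) :
    G.wdist w a (p.getVert n) + G.wdist w (p.getVert n) b ≤ p.wlength w := by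
  rw [← p.wlength_take_add_wlength_drop n]
  exact add_le_add (wdist_le_wlength hw _) (wdist_le_wlength hw _)

lemma wdist_add_wdist_add_wdist_getVert_le (hw : ∀ a b, G.Adj a b → 0 ≤ w a b)
    (p : G.Walk a b) {i j : ℕ} (hij : i ≤ j) :
    G.wdist w a (p.getVert i) + G.wdist w (p.getVert i) (p.getVert j) +
      G.wdist w (p.getVert j) b ≤ p.wlength w := by
  have h := wdist_add_wdist_getVert_le hw (p.drop i) (j - i)
  rw [drop_getVert, Nat.add_sub_cancel' hij] at h
  linarith [wdist_le_wlength hw (p.take i), p.wlength_take_add_wlength_drop (w := w) i]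

lemma IsAcyclic.wlength_le_of_isPath (hT : T.IsAcyclic) (hw : ∀ a b, T.Adj a b → 0 ≤ w a b)
    {p : T.Walk a b} (hp : p.IsPath) (q : T.Walk a b) : p.wlength w ≤ q.wlength w := by
  classical
  obtain rfl : q.bypass = p :=
    congrArg Subtype.val ((hT.subsingleton_path a b).elim ⟨_, q.bypass_isPath⟩ ⟨p, hp⟩)
  obtain ⟨l, hperm, hsub⟩ :=
    (darts_nodup_of_support_nodup hp.support_nodup).subperm q.darts_bypass_subset_darts
  rw [wlength, ← (hperm.map _).sum_eq]
  exact (hsub.map _).sum_le_sum (by simpa using fun d _ => hw _ _ d.adj)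

lemma IsAcyclic.wdist_eq_wlength (hT : T.IsAcyclic) (hw : ∀ a b, T.Adj a b → 0 ≤ w a b)
    {p : T.Walk a b} (hp : p.IsPath) : T.wdist w a b = p.wlength w :=
  (wdist_le_wlength hw p).antisymm (le_wdist ⟨p⟩ (hT.wlength_le_of_isPath hw hp))

lemma wdist_eq_add_of_mem_support_isPath (hG : G.Preconnected)
    (hw : ∀ a b, G.Adj a b → 0 ≤ w a b) (hTG : T ≤ G) (hT : T.IsAcyclic)
    (hdp : T.wdist w u x = G.wdist w u x) {p : T.Walk u x} (hp : p.IsPath) {m : V}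
    (hm : m ∈ p.support) : G.wdist w u x = G.wdist w u m + G.wdist w m x := by
  classical
  refine (wdist_triangle hG hw u m x).antisymm ?_
  have hsplit : p.wlength w = (p.takeUntil m hm).wlength w + (p.dropUntil m hm).wlength w := by
    rw [← wlength_append, take_spec]
  rw [← hdp, hT.wdist_eq_wlength (fun a b h => hw a b (hTG h)) hp, hsplit,
    ← wlength_mapLe hTG, ← wlength_mapLe hTG (p.dropUntil m hm)]
  exact add_le_add (wdist_le_wlength hw _) (wdist_le_wlength hw _)

namespace Walk

lemma exists_eq_append_of_end_mem (S : Set V) (q : G.Walk a b) (hb : b ∈ S) :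
    ∃ m ∈ S, ∃ (q₁ : G.Walk a m) (q₂ : G.Walk m b),
      q = q₁.append q₂ ∧ ∀ z ∈ q₁.support, z ∈ S → z = m := by
  induction q with
  | nil => exact ⟨_, hb, nil, nil, rfl, by simp⟩
  | @cons a c b h q ih =>
    by_cases ha : a ∈ S
    · exact ⟨a, ha, nil, cons h q, rfl, by simp⟩
    obtain ⟨m, hm, q₁, q₂, rfl, hfirst⟩ := ih hb
    refine ⟨m, hm, cons h q₁, q₂, rfl, ?_⟩
    rintro z hz hzS
    rcases List.mem_cons.1 (support_cons h q₁ ▸ hz) with rfl | hz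
    · exact absurd hzS ha
    · exact hfirst z hz hzS

lemma IsPath.append_of_support_inter {p : G.Walk a b} {q : G.Walk b c} (hp : p.IsPath)
    (hq : q.IsPath) (hpq : ∀ z ∈ p.support, z ∈ q.support → z = b) : (p.append q).IsPath := by
  rw [isPath_def, support_append]
  have hq' := hq.support_nodup
  rw [← cons_tail_support] at hq'
  refine hp.support_nodup.append (List.nodup_cons.1 hq').2 fun z hzp hzq => ?_
  obtain rfl := hpq z hzp (List.mem_of_mem_tail hzq)
  exact (List.nodup_cons.1 hq').1 hzq

end Walk

lemma exists_mem_support_of_isPath {R : G.Walk u v} (hR : R.IsPath) {p : G.Walk u x}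
    (hp : p.IsPath) :
    ∃ m ∈ R.support, m ∈ p.support ∧ ∃ q : G.Walk v x, q.IsPath ∧ m ∈ q.support := by
  classical
  -- `m` is the first vertex of `R` met by `p` walked back from `x`
  obtain ⟨m, hmR, q₁, q₂, hpq, hfirst⟩ :=
    p.reverse.exists_eq_append_of_end_mem {z | z ∈ R.support} R.start_mem_support
  have hmR' : m ∈ R.reverse.support := by simpa using hmR
  have hq₁ : q₁.IsPath := (hpq ▸ hp.reverse).of_append_left
  refine ⟨m, hmR, ?_, (R.reverse.takeUntil m hmR').append q₁.reverse,
    (hR.reverse.takeUntil hmR').append_of_support_inter hq₁.reverse fun z hzR hzq => ?_, ?_⟩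
  · have : m ∈ p.reverse.support :=
      hpq ▸ (q₁.mem_support_append_iff q₂).2 (.inl q₁.end_mem_support)
    simpa using this
  · exact hfirst z (by simpa using hzq)
      (by simpa using R.reverse.support_takeUntil_subset_support hmR' hzR)
  · exact ((R.reverse.takeUntil m hmR').mem_support_append_iff _).2 (.inl (end_mem_support _))

lemma IsTree.exists_mem_support_wdist_eq_add (hG : G.Preconnected)
    (hw : ∀ a b, G.Adj a b → 0 ≤ w a b) (hTG : T ≤ G) (hT : T.IsTree)
    (hdpu : T.wdist w u x = G.wdist w u x) (hdpv : T.wdist w v x = G.wdist w v x)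
    {R : T.Walk u v} (hR : R.IsPath) :
    ∃ m ∈ R.support, G.wdist w u x = G.wdist w u m + G.wdist w m x ∧
      G.wdist w v x = G.wdist w v m + G.wdist w m x := by
  obtain ⟨p, hp, -⟩ := hT.existsUnique_path u x
  obtain ⟨m, hmR, hmp, q, hq, hmq⟩ := exists_mem_support_of_isPath hR hp
  exact ⟨m, hmR, wdist_eq_add_of_mem_support_isPath hG hw hTG hT.isAcyclic hdpu hp hmp,
    wdist_eq_add_of_mem_support_isPath hG hw hTG hT.isAcyclic hdpv hq hmq⟩

lemma IsAcyclic.mapLe_eq_of_wlength_eq_wdist (hw : ∀ a b, G.Adj a b → 0 ≤ w a b) (hTG : T ≤ G)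
    (hT : T.IsAcyclic) (hdp : T.wdist w u v = G.wdist w u v) {R : T.Walk u v} (hR : R.IsPath)
    {P : G.Walk u v}
    (hPuniq : ∀ Q : G.Walk u v, Q.IsPath → Q.wlength w = G.wdist w u v → Q = P) :
    R.mapLe hTG = P :=
  hPuniq _ (hR.mapLe hTG) <| by
    rw [wlength_mapLe, ← hT.wdist_eq_wlength (fun a b h => hw a b (hTG h)) hR, hdp]

lemma wdist_le_of_mem_Vset (hw : ∀ a b, G.Adj a b → 0 ≤ w a b) {P : G.Walk u v} {i : ℕ}
    (hx : x ∈ Vset G w P i) {m : V} (hm : m ∈ P.support) :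
    G.wdist w x (P.getVert i) ≤ G.wdist w x m :=
  hx.trans_le <| csInf_le ⟨0, by rintro _ ⟨z, -, rfl⟩; exact wdist_nonneg hw x z⟩ ⟨m, hm, rfl⟩

lemma wdist_eq_add_of_mem_Vset (hG : G.Preconnected) (hw : ∀ a b, G.Adj a b → 0 ≤ w a b)
    (hsymm : ∀ a b, w a b = w b a) {P : G.Walk u v} (hPshort : P.wlength w = G.wdist w u v)
    {m : V} (hm : m ∈ P.support) (hux : G.wdist w u x = G.wdist w u m + G.wdist w m x)
    (hvx : G.wdist w v x = G.wdist w v m + G.wdist w m x) {i : ℕ} (hx : x ∈ Vset G w P i) :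
    G.wdist w u x = G.wdist w u (P.getVert i) + G.wdist w (P.getVert i) x ∧
      G.wdist w v x = G.wdist w v (P.getVert i) + G.wdist w (P.getVert i) x := by
  have hnear := wdist_le_of_mem_Vset hw hx hm
  rw [wdist_comm hsymm x, wdist_comm hsymm x] at hnear
  have hgeod := wdist_add_wdist_getVert_le hw P i
  rw [wdist_comm hsymm _ v] at hgeod
  have hm_geod := wdist_triangle hG hw u m v
  rw [wdist_comm hsymm m v] at hm_geod
  constructor <;> linarith [wdist_triangle hG hw u (P.getVert i) x,
    wdist_triangle hG hw v (P.getVert i) x]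

lemma edge_condition_of_le (hG : G.Preconnected) (hw : ∀ a b, G.Adj a b → 0 ≤ w a b)
    (hsymm : ∀ a b, w a b = w b a) {P : G.Walk u v} (hPshort : P.wlength w = G.wdist w u v)
    (hmed : ∀ x, ∃ m ∈ P.support, G.wdist w u x = G.wdist w u m + G.wdist w m x ∧
      G.wdist w v x = G.wdist w v m + G.wdist w m x)
    {i j : ℕ} (hij : i ≤ j) (hxy : G.Adj x y) (hx : x ∈ Vset G w P i)
    (hy : y ∈ Vset G w P j) :
    w x y ≥ G.wdist w (P.getVert i) (P.getVert j) ∧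
      |G.wdist w (P.getVert i) x - G.wdist w (P.getVert j) y| ≤
        w x y - G.wdist w (P.getVert i) (P.getVert j) := by
  obtain ⟨hux, hvx⟩ :=
    let ⟨m, hm, hux, hvx⟩ := hmed x; wdist_eq_add_of_mem_Vset hG hw hsymm hPshort hm hux hvx hx
  obtain ⟨huy, hvy⟩ :=
    let ⟨m, hm, huy, hvy⟩ := hmed y; wdist_eq_add_of_mem_Vset hG hw hsymm hPshort hm huy hvy hy
  have hgeod := wdist_add_wdist_add_wdist_getVert_le hw P hij
  have hvi := wdist_triangle hG hw u (P.getVert i) v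
  have hvj := wdist_triangle hG hw u (P.getVert j) v
  rw [wdist_comm hsymm (P.getVert j) v] at hgeod hvj
  rw [wdist_comm hsymm (P.getVert i) v] at hvi
  have hxy_u : G.wdist w u y ≤ G.wdist w u x + w x y := by
    linarith [wdist_triangle hG hw u x y, wdist_le_weight hw hxy]
  have hxy_v : G.wdist w v x ≤ G.wdist w v y + w x y := by
    linarith [wdist_triangle hG hw v y x, hsymm x y ▸ wdist_le_weight hw hxy.symm]
  exact ⟨by linarith, abs_sub_le_iff.2 ⟨by linarith, by linarith⟩⟩

end SimpleGraph

theorem edge_condition_of_common_dp_tree_general {V : Type*} (G : SimpleGraph V)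
    (hG : G.Connected) (w : V → V → ℝ) (hsymm : ∀ a b : V, w a b = w b a)
    (hpos : ∀ a b : V, G.Adj a b → 0 < w a b) (u v : V)
    (T : SimpleGraph V) (hTG : T ≤ G) (hT : T.IsTree)
    (hdpu : ∀ x : V, T.wdist w u x = G.wdist w u x)
    (hdpv : ∀ x : V, T.wdist w v x = G.wdist w v x)
    (P : G.Walk u v) (hPshort : P.wlength w = G.wdist w u v)
    (hPuniq : ∀ Q : G.Walk u v, Q.IsPath → Q.wlength w = G.wdist w u v → Q = P) :
    ∀ i j : ℕ, i ≤ P.length → j ≤ P.length → ∀ x y : V, G.Adj x y →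
      x ∈ Vset G w P i → y ∈ Vset G w P j →
      w x y ≥ G.wdist w (P.getVert i) (P.getVert j) ∧
        |G.wdist w (P.getVert i) x - G.wdist w (P.getVert j) y| ≤
          w x y - G.wdist w (P.getVert i) (P.getVert j) := by
  intro i j _ _ x y hxy hx hy
  have hw : ∀ a b, G.Adj a b → 0 ≤ w a b := fun a b h => (hpos a b h).le
  obtain ⟨R, hR, -⟩ := hT.existsUnique_path u v
  have hRP := hT.isAcyclic.mapLe_eq_of_wlength_eq_wdist hw hTG (hdpu v) hR hPuniq
  have hmed (z : V) : ∃ m ∈ P.support, G.wdist w u z = G.wdist w u m + G.wdist w m z ∧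
      G.wdist w v z = G.wdist w v m + G.wdist w m z := by
    rw [← hRP, Walk.support_mapLe_eq_support]
    exact hT.exists_mem_support_wdist_eq_add hG.preconnected hw hTG (hdpu z) (hdpv z) hR
  rcases le_total i j with hij | hji
  · exact edge_condition_of_le hG.preconnected hw hsymm hPshort hmed hij hxy hx hy
  · have := edge_condition_of_le hG.preconnected hw hsymm hPshort hmed hji hxy.symm hy hx
    rwa [hsymm y x, wdist_comm hsymm (P.getVert j), abs_sub_comm] at this

/-- **Lemma 3.** If `u` and `v` have a common distance-preserving spanning tree in `G`, and
`e = xy` is an edge of `G` with `x ∈ V_i` and `y ∈ V_j`, then `w(e) ≥ d_G(v_i, v_j)` and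
`|d_G(v_i, x) − d_G(v_j, y)| ≤ w(e) − d_G(v_i, v_j)`. -/
theorem edge_condition_of_common_dp_tree {V : Type*} [Fintype V] (G : SimpleGraph V)
    (hG : G.Connected) (w : V → V → ℝ) (hsymm : ∀ a b : V, w a b = w b a)
    (hpos : ∀ a b : V, G.Adj a b → 0 < w a b) (u v : V)
    (T : SimpleGraph V) (hTG : T ≤ G) (hT : T.IsTree)
    (hdpu : ∀ x : V, T.wdist w u x = G.wdist w u x)
    (hdpv : ∀ x : V, T.wdist w v x = G.wdist w v x)
    (P : G.Walk u v) (hP : P.IsPath) (hPshort : P.wlength w = G.wdist w u v)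
    (hPuniq : ∀ Q : G.Walk u v, Q.IsPath → Q.wlength w = G.wdist w u v → Q = P) :
    ∀ i j : ℕ, i ≤ P.length → j ≤ P.length → ∀ x y : V, G.Adj x y →
      x ∈ Vset G w P i → y ∈ Vset G w P j →
      w x y ≥ G.wdist w (P.getVert i) (P.getVert j) ∧
        |G.wdist w (P.getVert i) x - G.wdist w (P.getVert j) y| ≤
          w x y - G.wdist w (P.getVert i) (P.getVert j) :=
  edge_condition_of_common_dp_tree_general G hG w hsymm hpos u v T hTG hT hdpu hdpv P hPshort hPuniq
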